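/- arXiv:1906.10012 — 7 statements merged into one kernel-verified Lean document; each statement's English description precedes it below -/
import Mathlib

section
/- Let G be a split graph with vertex partition (C, I) where C is a clique and I is an independent set. Then G is a block graph (every biconnected component is a clique) if and only if (1) every vertex in I with degree at least 2 is adjacent to all vertices of C, and (2) at most one vertex in I has degree at least 2. -/
variable {V : Type*}

def IsBiconn (G : SimpleGraph V) (B : Set V) : Prop :=
  (G.induce B).Connected ∧ ∀ v ∈ B, (G.induce (B \ {v})).Connected

def IsBlock (G : SimpleGraph V) (B : Set V) : Prop :=
  IsBiconn G B ∧ ∀ B' : Set V, IsBiconn G B' → B ⊆ B' → B' = B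

def IsBlockGraph (G : SimpleGraph V) : Prop :=
  ∀ B : Set V, IsBlock G B → G.IsClique B

/-! A block graph is a graph without an induced diamond (`K₄` minus an edge): the diamond is
biconnected but not a clique. For a split graph `(C, I)` a diamond is either a vertex of `I` with
two neighbours and a non-neighbour in `C`, or two vertices of `I` with two common neighbours.
Conversely, under the two conditions every biconnected set containing only vertices of `I` of
degree at least `2` is a clique by inspection, while a vertex with at most one neighbour lies in
no biconnected set other than an edge. -/

namespace SimpleGraph

variable {G : SimpleGraph V} {S : Set V}

lemma connected_induce_of_forall_adj {h : V} (hh : h ∈ S) (hadj : ∀ x ∈ S, x ≠ h → G.Adj h x) :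
    (G.induce S).Connected := by
  have reach_hub : ∀ x : S, (G.induce S).Reachable x ⟨h, hh⟩ := by
    rintro ⟨x, hx⟩
    by_cases hxh : x = h
    · subst hxh; rfl
    · exact Adj.reachable (hadj x hx hxh).symm
  exact (connected_iff _).2 ⟨fun a b => (reach_hub a).trans (reach_hub b).symm, ⟨⟨h, hh⟩⟩⟩

lemma exists_adj_mem_of_connected_induce (hS : (G.induce S).Connected) {u z : V} (hu : u ∈ S)
    (hz : z ∈ S) (huz : u ≠ z) : ∃ w ∈ S, G.Adj u w := by
  have : Nontrivial S := ⟨⟨⟨u, hu⟩, ⟨z, hz⟩, fun h => huz (congrArg Subtype.val h)⟩⟩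
  obtain ⟨⟨w, hw⟩, huw⟩ := hS.preconnected.exists_adj_of_nontrivial ⟨u, hu⟩
  exact ⟨w, hw, huw⟩

lemma exists_adj_adj_of_two_le_degree [Fintype V] [DecidableRel G.Adj] {v : V}
    (hv : 2 ≤ G.degree v) : ∃ b c, b ≠ c ∧ G.Adj v b ∧ G.Adj v c := by
  obtain ⟨b, hb, c, hc, hbc⟩ := Finset.one_lt_card.mp hv
  exact ⟨b, c, hbc, (mem_neighborFinset G v b).1 hb, (mem_neighborFinset G v c).1 hc⟩

lemma neighborSet_subsingleton_of_degree_lt_two [Fintype V] [DecidableRel G.Adj] {v : V}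
    (hv : G.degree v < 2) : (G.neighborSet v).Subsingleton := by
  rw [← coe_neighborFinset, ← Finset.card_le_one_iff_subsingleton]
  exact Nat.le_of_lt_succ hv

end SimpleGraph

open SimpleGraph

variable {G : SimpleGraph V} {S : Set V}

lemma isBiconn_of_forall_adj {h₁ h₂ : V} (h₁₂ : h₁ ≠ h₂) (hh₁ : h₁ ∈ S) (hh₂ : h₂ ∈ S)
    (hadj₁ : ∀ x ∈ S, x ≠ h₁ → G.Adj h₁ x) (hadj₂ : ∀ x ∈ S, x ≠ h₂ → G.Adj h₂ x) :
    IsBiconn G S := by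
  refine ⟨connected_induce_of_forall_adj hh₁ hadj₁, fun w _ => ?_⟩
  by_cases hw : w = h₁
  · subst hw
    exact connected_induce_of_forall_adj ⟨hh₂, h₁₂.symm⟩ fun x hx hx₂ => hadj₂ x hx.1 hx₂
  · exact connected_induce_of_forall_adj ⟨hh₁, Ne.symm hw⟩ fun x hx hx₁ => hadj₁ x hx.1 hx₁

lemma isBiconn_diamond {x y b c : V} (hbc : G.Adj b c) (hxb : G.Adj x b) (hxc : G.Adj x c)
    (hyb : G.Adj y b) (hyc : G.Adj y c) : IsBiconn G {x, y, b, c} := by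
  refine isBiconn_of_forall_adj hbc.ne (by simp) (by simp) ?_ ?_ <;>
  · intro z hz hne
    simp only [Set.mem_insert_iff, Set.mem_singleton_iff] at hz
    rcases hz with rfl | rfl | rfl | rfl
    all_goals first | exact absurd rfl hne | assumption | exact Adj.symm ‹_›

/-- If `u` had a neighbour `w ∈ S` other than `z`, a path from `u` to `z` avoiding `w` would
give `u` a second neighbour. -/
lemma IsBiconn.adj_of_subsingleton_neighborSet (hS : IsBiconn G S) {u z : V} (hu : u ∈ S)
    (hz : z ∈ S) (huz : u ≠ z) (hN : (G.neighborSet u).Subsingleton) : G.Adj u z := by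
  obtain ⟨w, hwS, huw⟩ := exists_adj_mem_of_connected_induce hS.1 hu hz huz
  by_contra hnot
  have hwz : w ≠ z := fun h => hnot (h ▸ huw)
  obtain ⟨w', hw', huw'⟩ := exists_adj_mem_of_connected_induce (hS.2 w hwS)
    ⟨hu, huw.ne⟩ ⟨hz, hwz.symm⟩ huz
  exact hw'.2 (hN huw' huw)

lemma IsBiconn.isClique_of_subsingleton_neighborSet (hS : IsBiconn G S) {u : V} (hu : u ∈ S)
    (hN : (G.neighborSet u).Subsingleton) : G.IsClique S := by
  have hadj : ∀ z ∈ S, z ≠ u → G.Adj u z := fun z hz hzu =>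
    hS.adj_of_subsingleton_neighborSet hu hz (Ne.symm hzu) hN
  intro x hx y hy hxy
  by_cases hxu : x = u
  · subst hxu; exact hadj y hy (Ne.symm hxy)
  by_cases hyu : y = u
  · subst hyu; exact (hadj x hx hxu).symm
  exact absurd (hN (hadj x hx hxu) (hadj y hy hyu)) hxy

lemma IsBlockGraph.isClique_of_isBiconn [Finite V] (hG : IsBlockGraph G) (hS : IsBiconn G S) :
    G.IsClique S := by
  obtain ⟨B, hB⟩ := (Set.toFinite {B | IsBiconn G B ∧ S ⊆ B}).exists_maximal ⟨S, hS, le_rfl⟩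
  have hblock : IsBlock G B :=
    ⟨hB.prop.1, fun B' hB' hsub => (hB.eq_of_le ⟨hB', hB.prop.2.trans hsub⟩ hsub).symm⟩
  exact (hG B hblock).subset hB.prop.2

lemma IsBlockGraph.adj_of_adj_of_adj [Finite V] (hG : IsBlockGraph G) {x y b c : V}
    (hxy : x ≠ y) (hbc : G.Adj b c) (hxb : G.Adj x b) (hxc : G.Adj x c) (hyb : G.Adj y b)
    (hyc : G.Adj y c) : G.Adj x y :=
  hG.isClique_of_isBiconn (isBiconn_diamond hbc hxb hxc hyb hyc) (by simp) (by simp) hxy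

lemma IsBlockGraph.adj_of_isClique [Finite V] (hG : IsBlockGraph G) (hS : G.IsClique S)
    {v a b c : V} (ha : a ∈ S) (hb : b ∈ S) (hc : c ∈ S) (hva : v ≠ a) (hbc : b ≠ c)
    (hvb : G.Adj v b) (hvc : G.Adj v c) : G.Adj v a := by
  by_contra hnot
  have hab : a ≠ b := fun h => hnot (h ▸ hvb)
  have hac : a ≠ c := fun h => hnot (h ▸ hvc)
  exact hnot (hG.adj_of_adj_of_adj hva (hS hb hc hbc) hvb hvc (hS ha hb hab) (hS ha hc hac))

theorem stmt_0 [Fintype V] (G : SimpleGraph V) [DecidableRel G.Adj]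
    (C I : Set V) (hunion : ∀ v, v ∈ C ∨ v ∈ I) (hdisj : Disjoint C I)
    (hC : G.IsClique C) (hI : ∀ u ∈ I, ∀ v ∈ I, ¬ G.Adj u v) :
    IsBlockGraph G ↔
      ((∀ v ∈ I, 2 ≤ G.degree v → ∀ a ∈ C, G.Adj v a) ∧
       (∀ u ∈ I, ∀ v ∈ I, 2 ≤ G.degree u → 2 ≤ G.degree v → u = v)) := by
  have mem_C_of_adj : ∀ v ∈ I, ∀ x, G.Adj v x → x ∈ C := fun v hv x hvx =>
    (hunion x).resolve_right fun hx => hI v hv x hx hvx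
  constructor
  · intro hG
    have full : ∀ v ∈ I, 2 ≤ G.degree v → ∀ a ∈ C, G.Adj v a := by
      intro v hv hdeg a ha
      obtain ⟨b, c, hbc, hvb, hvc⟩ := exists_adj_adj_of_two_le_degree hdeg
      exact hG.adj_of_isClique hC ha (mem_C_of_adj v hv b hvb) (mem_C_of_adj v hv c hvc)
        (hdisj.ne_of_mem ha hv).symm hbc hvb hvc
    refine ⟨full, fun u hu v hv hdu hdv => by_contra fun huv => ?_⟩
    obtain ⟨b, c, hbc, hub, huc⟩ := exists_adj_adj_of_two_le_degree hdu
    have hb := mem_C_of_adj u hu b hub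
    have hc := mem_C_of_adj u hu c huc
    exact hI u hu v hv <| hG.adj_of_adj_of_adj huv (hC hb hc hbc) hub huc
      (full v hv hdv b hb) (full v hv hdv c hc)
  · rintro ⟨full, unique⟩ B hB
    by_cases hlow : ∃ u ∈ B, u ∈ I ∧ G.degree u < 2
    · obtain ⟨u, huB, -, hdeg⟩ := hlow
      exact hB.1.isClique_of_subsingleton_neighborSet huB
        (neighborSet_subsingleton_of_degree_lt_two hdeg)
    push Not at hlow
    intro x hx y hy hxy
    rcases hunion x with hxC | hxI <;> rcases hunion y with hyC | hyI
    · exact hC hxC hyC hxy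
    · exact (full y hyI (hlow y hy hyI) x hxC).symm
    · exact full x hxI (hlow x hx hxI) y hyC
    · exact absurd (unique x hxI y hyI (hlow x hx hxI) (hlow y hy hyI)) hxy
end

section
/- A split graph G is a block graph if and only if G contains no induced diamond, where a diamond is the graph on 4 vertices with 5 edges (K4 minus one edge). -/
variable {V : Type*}

/-- `a,b,c,d` induce a diamond (K4 minus the edge `cd`). -/
def InducedDiamond (G : SimpleGraph V) (a b c d : V) : Prop :=
  a ≠ b ∧ a ≠ c ∧ a ≠ d ∧ b ≠ c ∧ b ≠ d ∧ c ≠ d ∧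
  G.Adj a b ∧ G.Adj a c ∧ G.Adj a d ∧ G.Adj b c ∧ G.Adj b d ∧ ¬ G.Adj c d

/-!
A diamond is 2-connected, so by Zorn's lemma it lies in a block; in a block graph that block is
a clique, which contradicts the missing edge of the diamond. This direction holds in every graph.

Conversely, let `x, y` be non-adjacent vertices of a 2-connected set of a diamond-free split
graph with clique `C` and independent set `I`. If, say, `x ∈ I`, then 2-connectivity gives `x`
two neighbours in `C`, and diamond-freeness then makes `x` adjacent to every other vertex of `C`.
So `y ∉ C`; but then `y ∈ I` also has two neighbours in `C`, which are common neighbours of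
`x` and `y`, and these four vertices induce a diamond.
-/

namespace SimpleGraph

variable {G : SimpleGraph V}

lemma connected_induce_of_forall_adj_s1 {s : Set V} {u : V} (hu : u ∈ s)
    (hadj : ∀ v ∈ s, v ≠ u → G.Adj u v) : (G.induce s).Connected := by
  have : Nonempty s := ⟨⟨u, hu⟩⟩
  have hreach : ∀ x : s, (G.induce s).Reachable ⟨u, hu⟩ x := by
    rintro ⟨x, hx⟩
    by_cases hxu : x = u
    · subst hxu; rfl
    · exact Adj.reachable (by simpa using hadj x hx hxu)
  exact ⟨fun x y => (hreach x).symm.trans (hreach y)⟩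

lemma connected_induce_sUnion_of_isChain {c : Set (Set V)} (hchain : IsChain (· ⊆ ·) c)
    (hne : c.Nonempty) (hconn : ∀ s ∈ c, (G.induce s).Connected) :
    (G.induce (⋃₀ c)).Connected := by
  refine induce_sUnion_connected_of_pairwise_not_disjoint hne (fun {s t} hs ht => ?_)
    (hconn _ ·)
  obtain ⟨⟨x, hx⟩⟩ := (hconn s hs).nonempty
  obtain ⟨⟨y, hy⟩⟩ := (hconn t ht).nonempty
  rcases hchain.total hs ht with hst | hts
  · exact ⟨x, hx, hst hx⟩
  · exact ⟨y, hts hy, hy⟩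

lemma Connected.exists_adj_of_induce {s : Set V} (hs : (G.induce s).Connected) {x y : V}
    (hx : x ∈ s) (hy : y ∈ s) (hxy : x ≠ y) : ∃ z ∈ s, G.Adj x z := by
  obtain ⟨w⟩ := hs.preconnected ⟨x, hx⟩ ⟨y, hy⟩
  cases w with
  | nil => exact absurd rfl hxy
  | cons h _ => exact ⟨_, Subtype.mem _, h⟩

end SimpleGraph

open SimpleGraph

variable {G : SimpleGraph V}

lemma IsBiconn.sUnion_of_isChain {c : Set (Set V)} (hchain : IsChain (· ⊆ ·) c)
    (hne : c.Nonempty) (hc : ∀ B ∈ c, IsBiconn G B) : IsBiconn G (⋃₀ c) := by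
  refine ⟨connected_induce_sUnion_of_isChain hchain hne fun B hB => (hc B hB).1, fun v _ => ?_⟩
  rw [show ⋃₀ c \ {v} = ⋃₀ ((· \ {v}) '' c) by
    rw [Set.sUnion_image, Set.sUnion_eq_biUnion]; simp [Set.iUnion_sdiff]]
  refine connected_induce_sUnion_of_isChain ?_ (hne.image _) ?_
  · exact hchain.image_of_map_rel _ _ _ fun _ _ h => Set.sdiff_subset_sdiff_left h
  · rintro _ ⟨B, hB, rfl⟩
    dsimp only
    by_cases hvB : v ∈ B
    · exact (hc B hB).2 v hvB
    · rw [Set.sdiff_singleton_eq_self hvB]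
      exact (hc B hB).1

lemma IsBiconn.exists_isBlock_superset {B : Set V} (hB : IsBiconn G B) :
    ∃ M, B ⊆ M ∧ IsBlock G M := by
  obtain ⟨M, hBM, hM⟩ := zorn_subset_nonempty {M | IsBiconn G M} (fun c hc hchain hne =>
    ⟨⋃₀ c, IsBiconn.sUnion_of_isChain hchain hne hc, fun _ => Set.subset_sUnion_of_mem⟩) B hB
  exact ⟨M, hBM, hM.prop, fun B' hB' hMB' => (hM.eq_of_subset hB' hMB').symm⟩

lemma IsBiconn.exists_two_adj {B : Set V} (hB : IsBiconn G B) {x y : V} (hx : x ∈ B)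
    (hy : y ∈ B) (hxy : x ≠ y) (hnadj : ¬ G.Adj x y) :
    ∃ u₁ u₂, u₁ ≠ u₂ ∧ G.Adj x u₁ ∧ G.Adj x u₂ := by
  obtain ⟨u₁, hu₁, hxu₁⟩ := hB.1.exists_adj_of_induce hx hy hxy
  have hyu₁ : y ≠ u₁ := fun h => hnadj (h ▸ hxu₁)
  obtain ⟨u₂, hu₂, hxu₂⟩ := (hB.2 u₁ hu₁).exists_adj_of_induce
    ⟨hx, hxu₁.ne⟩ ⟨hy, hyu₁⟩ hxy
  exact ⟨u₁, u₂, fun h => hu₂.2 h.symm, hxu₁, hxu₂⟩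

lemma InducedDiamond.isBiconn {a b c d : V} (hd : InducedDiamond G a b c d) :
    IsBiconn G {a, b, c, d} := by
  obtain ⟨hab, hac, had, hbc, hbd, -, ab, ac, ad, bc, bd, -⟩ := hd
  have hub_a : ∀ S ⊆ ({a, b, c, d} : Set V), a ∈ S → (G.induce S).Connected := by
    intro S hS ha
    refine connected_induce_of_forall_adj_s1 ha fun v hv hva => ?_
    rcases hS hv with rfl | rfl | rfl | rfl <;> first | exact absurd rfl hva | assumption
  refine ⟨hub_a _ subset_rfl (by simp), fun v _ => ?_⟩
  by_cases hva : v = a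
  · subst hva
    refine connected_induce_of_forall_adj_s1 (u := b) ⟨by simp, hab.symm⟩ fun w ⟨hw, hwv⟩ hwb =>
      ?_
    rcases hw with rfl | rfl | rfl | rfl <;> simp_all
  · exact hub_a _ Set.sdiff_subset ⟨by simp, Ne.symm hva⟩

lemma InducedDiamond.of_common_adj {u₁ u₂ x y : V} (hu : u₁ ≠ u₂) (hu₁₂ : G.Adj u₁ u₂)
    (hxu₁ : G.Adj x u₁) (hxu₂ : G.Adj x u₂) (hyu₁ : G.Adj y u₁) (hyu₂ : G.Adj y u₂)
    (hxy : x ≠ y) (hnadj : ¬ G.Adj x y) : InducedDiamond G u₁ u₂ x y :=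
  ⟨hu, hxu₁.ne.symm, hyu₁.ne.symm, hxu₂.ne.symm, hyu₂.ne.symm, hxy,
    hu₁₂, hxu₁.symm, hyu₁.symm, hxu₂.symm, hyu₂.symm, hnadj⟩

lemma not_exists_inducedDiamond_of_isBlockGraph (hG : IsBlockGraph G) :
    ¬ ∃ a b c d : V, InducedDiamond G a b c d := by
  rintro ⟨a, b, c, d, hd⟩
  obtain ⟨M, hDM, hM⟩ := hd.isBiconn.exists_isBlock_superset
  obtain ⟨-, -, -, -, -, hcd, -, -, -, -, -, hncd⟩ := hd
  exact hncd (hG M hM (hDM (by simp)) (hDM (by simp)) hcd)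

lemma adj_of_two_adj_of_isClique {C : Set V} (hC : G.IsClique C)
    (hnd : ¬ ∃ a b c d : V, InducedDiamond G a b c d) {x u₁ u₂ w : V} (hu₁ : u₁ ∈ C)
    (hu₂ : u₂ ∈ C) (hu : u₁ ≠ u₂) (hxu₁ : G.Adj x u₁) (hxu₂ : G.Adj x u₂) (hw : w ∈ C)
    (hxw : x ≠ w) : G.Adj x w := by
  by_contra hnadj
  have hwu₁ : w ≠ u₁ := by rintro rfl; exact hnadj hxu₁
  have hwu₂ : w ≠ u₂ := by rintro rfl; exact hnadj hxu₂
  exact hnd ⟨u₁, u₂, x, w, .of_common_adj hu (hC hu₁ hu₂ hu) hxu₁ hxu₂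
    (hC hw hu₁ hwu₁) (hC hw hu₂ hwu₂) hxw hnadj⟩

section Split

variable {C I : Set V}

lemma IsBiconn.exists_two_adj_mem_clique (hunion : ∀ v, v ∈ C ∨ v ∈ I)
    (hI : ∀ u ∈ I, ∀ v ∈ I, ¬ G.Adj u v) {B : Set V} (hB : IsBiconn G B) {x y : V}
    (hx : x ∈ B) (hy : y ∈ B) (hxy : x ≠ y) (hnadj : ¬ G.Adj x y) (hxI : x ∈ I) :
    ∃ u₁ ∈ C, ∃ u₂ ∈ C, u₁ ≠ u₂ ∧ G.Adj x u₁ ∧ G.Adj x u₂ := by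
  obtain ⟨u₁, u₂, hu, hxu₁, hxu₂⟩ := hB.exists_two_adj hx hy hxy hnadj
  have mem_C : ∀ {u}, G.Adj x u → u ∈ C := fun {u} hxu =>
    (hunion u).resolve_right fun huI => hI x hxI u huI hxu
  exact ⟨u₁, mem_C hxu₁, u₂, mem_C hxu₂, hu, hxu₁, hxu₂⟩

lemma IsBiconn.adj_of_mem_indep (hunion : ∀ v, v ∈ C ∨ v ∈ I) (hC : G.IsClique C)
    (hI : ∀ u ∈ I, ∀ v ∈ I, ¬ G.Adj u v) (hnd : ¬ ∃ a b c d : V, InducedDiamond G a b c d)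
    {B : Set V} (hB : IsBiconn G B) {x y : V} (hx : x ∈ B) (hy : y ∈ B) (hxy : x ≠ y)
    (hxI : x ∈ I) : G.Adj x y := by
  by_contra hnadj
  obtain ⟨u₁, hu₁, u₂, hu₂, hu, hxu₁, hxu₂⟩ :=
    hB.exists_two_adj_mem_clique hunion hI hx hy hxy hnadj hxI
  have hx_adj_C : ∀ {w}, w ∈ C → x ≠ w → G.Adj x w :=
    adj_of_two_adj_of_isClique hC hnd hu₁ hu₂ hu hxu₁ hxu₂
  rcases hunion y with hyC | hyI
  · exact hnadj (hx_adj_C hyC hxy)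
  obtain ⟨w₁, hw₁, w₂, hw₂, hw, hyw₁, hyw₂⟩ :=
    hB.exists_two_adj_mem_clique hunion hI hy hx hxy.symm (hnadj ·.symm) hyI
  have hxw : ∀ {w}, G.Adj y w → x ≠ w := fun hyw hxw => hnadj (hxw ▸ hyw.symm)
  exact hnd ⟨w₁, w₂, x, y, .of_common_adj hw (hC hw₁ hw₂ hw) (hx_adj_C hw₁ (hxw hyw₁))
    (hx_adj_C hw₂ (hxw hyw₂)) hyw₁ hyw₂ hxy hnadj⟩

lemma IsBiconn.isClique_of_split (hunion : ∀ v, v ∈ C ∨ v ∈ I) (hC : G.IsClique C)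
    (hI : ∀ u ∈ I, ∀ v ∈ I, ¬ G.Adj u v) (hnd : ¬ ∃ a b c d : V, InducedDiamond G a b c d)
    {B : Set V} (hB : IsBiconn G B) : G.IsClique B := by
  intro x hx y hy hxy
  rcases hunion x with hxC | hxI
  · rcases hunion y with hyC | hyI
    · exact hC hxC hyC hxy
    · exact (hB.adj_of_mem_indep hunion hC hI hnd hy hx hxy.symm hyI).symm
  · exact hB.adj_of_mem_indep hunion hC hI hnd hx hy hxy hxI

end Split

theorem stmt_1_general (G : SimpleGraph V)
    (C I : Set V) (hunion : ∀ v, v ∈ C ∨ v ∈ I)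
    (hC : G.IsClique C) (hI : ∀ u ∈ I, ∀ v ∈ I, ¬ G.Adj u v) :
    IsBlockGraph G ↔ ¬ ∃ a b c d : V, InducedDiamond G a b c d :=
  ⟨not_exists_inducedDiamond_of_isBlockGraph,
    fun hnd _ hB => hB.1.isClique_of_split hunion hC hI hnd⟩

theorem stmt_1 (G : SimpleGraph V)
    (C I : Set V) (hunion : ∀ v, v ∈ C ∨ v ∈ I) (hdisj : Disjoint C I)
    (hC : G.IsClique C) (hI : ∀ u ∈ I, ∀ v ∈ I, ¬ G.Adj u v) :
    IsBlockGraph G ↔ ¬ ∃ a b c d : V, InducedDiamond G a b c d :=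
  stmt_1_general G C I hunion hC hI
end

section
/- Let G be a split graph with partition (C, I), let S be a set of vertices such that G − S is P4-free, and suppose u, v ∈ I are such that there exist a ∈ N(u) \ N(v) and b ∈ N(v) \ N(u). Then u ∈ S, or v ∈ S, or (N(u) \ N(v)) ⊆ S, or (N(v) \ N(u)) ⊆ S. -/
variable {V : Type*}

/-- `a,b,c,d` (in this order) form an induced path on four vertices. -/
def InducedP4 (G : SimpleGraph V) (a b c d : V) : Prop :=
  a ≠ b ∧ a ≠ c ∧ a ≠ d ∧ b ≠ c ∧ b ≠ d ∧ c ≠ d ∧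
  G.Adj a b ∧ G.Adj b c ∧ G.Adj c d ∧ ¬ G.Adj a c ∧ ¬ G.Adj a d ∧ ¬ G.Adj b d

/-- A graph is `P4`-free if it has no induced path on four vertices. -/
def P4Free (G : SimpleGraph V) : Prop := ¬ ∃ a b c d : V, InducedP4 G a b c d

section

variable {G : SimpleGraph V}

theorem inducedP4_of_private_neighbors {u a b v : V} (huv : ¬ G.Adj u v)
    (hau : G.Adj u a) (hav : ¬ G.Adj v a) (hbv : G.Adj v b) (hbu : ¬ G.Adj u b)
    (hab : G.Adj a b) : InducedP4 G u a b v := by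
  refine ⟨hau.ne, ?_, ?_, hab.ne, ?_, hbv.ne.symm, hau, hab, hbv.symm, hbu, huv,
    fun h => hav h.symm⟩
  · rintro rfl; exact huv hbv.symm
  · rintro rfl; exact hav hau
  · rintro rfl; exact huv hau

theorem P4Free.not_inducedP4_of_mem {s : Set V} (hs : P4Free (G.induce s)) {a b c d : V}
    (ha : a ∈ s) (hb : b ∈ s) (hc : c ∈ s) (hd : d ∈ s) : ¬ InducedP4 G a b c d := by
  rintro ⟨hab, hac, had, hbc, hbd, hcd, h⟩
  exact hs ⟨⟨a, ha⟩, ⟨b, hb⟩, ⟨c, hc⟩, ⟨d, hd⟩, Subtype.coe_ne_coe.mp hab,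
    Subtype.coe_ne_coe.mp hac, Subtype.coe_ne_coe.mp had, Subtype.coe_ne_coe.mp hbc,
    Subtype.coe_ne_coe.mp hbd, Subtype.coe_ne_coe.mp hcd, h⟩

theorem mem_clique_of_adj_of_mem_indep {C I : Set V} (hunion : ∀ v, v ∈ C ∨ v ∈ I)
    (hI : ∀ u ∈ I, ∀ v ∈ I, ¬ G.Adj u v) {u a : V} (hu : u ∈ I) (hua : G.Adj u a) :
    a ∈ C :=
  (hunion a).resolve_right fun ha => hI u hu a ha hua

end

theorem stmt_6_general (G : SimpleGraph V)
    (C I : Set V) (hunion : ∀ v, v ∈ C ∨ v ∈ I)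
    (hC : G.IsClique C) (hI : ∀ u ∈ I, ∀ v ∈ I, ¬ G.Adj u v)
    (S : Set V) (hS : P4Free (G.induce Sᶜ))
    (u v : V) (hu : u ∈ I) (hv : v ∈ I) :
    u ∈ S ∨ v ∈ S ∨ (G.neighborSet u \ G.neighborSet v) ⊆ S ∨
      (G.neighborSet v \ G.neighborSet u) ⊆ S := by
  by_contra! ⟨huS, hvS, hAS, hBS⟩
  obtain ⟨a, ⟨hau, hav⟩, haS⟩ := Set.not_subset.mp hAS
  obtain ⟨b, ⟨hbv, hbu⟩, hbS⟩ := Set.not_subset.mp hBS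
  have hab : G.Adj a b :=
    hC (mem_clique_of_adj_of_mem_indep hunion hI hu hau)
      (mem_clique_of_adj_of_mem_indep hunion hI hv hbv) fun h => hbu (h ▸ hau)
  exact hS.not_inducedP4_of_mem huS haS hbS hvS
    (inducedP4_of_private_neighbors (hI u hu v hv) hau hav hbv hbu hab)

theorem stmt_6 (G : SimpleGraph V)
    (C I : Set V) (hunion : ∀ v, v ∈ C ∨ v ∈ I) (hdisj : Disjoint C I)
    (hC : G.IsClique C) (hI : ∀ u ∈ I, ∀ v ∈ I, ¬ G.Adj u v)
    (S : Set V) (hS : P4Free (G.induce Sᶜ))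
    (u v : V) (hu : u ∈ I) (hv : v ∈ I)
    (ha : (G.neighborSet u \ G.neighborSet v).Nonempty)
    (hb : (G.neighborSet v \ G.neighborSet u).Nonempty) :
    u ∈ S ∨ v ∈ S ∨ (G.neighborSet u \ G.neighborSet v) ⊆ S ∨
      (G.neighborSet v \ G.neighborSet u) ⊆ S :=
  stmt_6_general G C I hunion hC hI S hS u v hu hv
end

section
/- Let G be a split graph with partition (C, I), and let u1, v, w ∈ I. Assume that for all pairs x, y ∈ I with |N(x)| ≤ |N(y)| we have |N(x) \ N(y)| ≤ 1; assume |N(v)| > |N(u1)| and |N(w)| > |N(u1)|; and assume there exist a ∈ (N(u1) ∩ N(w)) \ N(v) and a1 ∈ (N(u1) ∩ N(v)) \ N(w). Then |(N(v) ∩ N(w)) \ N(u1)| ≥ 2. -/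
lemma key_aux {α : Type*} (Nu Nv Nw : Set α)
    (hNu : Nu.Finite) (hNv : Nv.Finite)
    (h1 : (Nv \ Nw).ncard ≤ 1) (h2 : (Nu \ Nv).ncard ≤ 1)
    (hv1 : Nu.ncard < Nv.ncard)
    (a : α) (ha : a ∈ (Nu ∩ Nw) \ Nv) (a1 : α) (ha1 : a1 ∈ (Nu ∩ Nv) \ Nw) :
    2 ≤ ((Nv ∩ Nw) \ Nu).ncard := by
  have e1 : (Nv ∩ Nw).ncard + (Nv \ Nw).ncard = Nv.ncard :=
    Set.ncard_inter_add_ncard_diff_eq_ncard Nv Nw hNv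
  have e2 : (Nu ∩ Nv).ncard + (Nu \ Nv).ncard = Nu.ncard :=
    Set.ncard_inter_add_ncard_diff_eq_ncard Nu Nv hNu
  have e3 : ((Nv ∩ Nw) ∩ Nu).ncard + ((Nv ∩ Nw) \ Nu).ncard = (Nv ∩ Nw).ncard :=
    Set.ncard_inter_add_ncard_diff_eq_ncard _ _ (hNv.inter_of_left Nw)
  have hapos : 1 ≤ (Nu \ Nv).ncard :=
    by
    have : a ∈ Nu \ Nv := ⟨ha.1.1, ha.2⟩
    exact (Set.ncard_pos (hNu.diff : (Nu \ Nv).Finite)).mpr ⟨a, this⟩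
  have hnm : a1 ∉ (Nv ∩ Nw) ∩ Nu := fun h => ha1.2 h.1.2
  have hsub : insert a1 ((Nv ∩ Nw) ∩ Nu) ⊆ Nu ∩ Nv := by
    rintro x (rfl | hx)
    · exact ⟨ha1.1.1, ha1.1.2⟩
    · exact ⟨hx.2, hx.1.1⟩
  have hins : ((Nv ∩ Nw) ∩ Nu).ncard + 1 ≤ (Nu ∩ Nv).ncard := by
    have := Set.ncard_le_ncard hsub (hNu.inter_of_left Nv)
    rwa [Set.ncard_insert_of_notMem hnm ((hNv.inter_of_left Nw).inter_of_left Nu)] at this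
  omega

theorem stmt_10 {V : Type*} [Fintype V] (G : SimpleGraph V)
    (C I : Set V) (hunion : ∀ x, x ∈ C ∨ x ∈ I) (hdisj : Disjoint C I)
    (hC : G.IsClique C) (hI : ∀ x ∈ I, ∀ y ∈ I, ¬ G.Adj x y)
    (hall : ∀ x ∈ I, ∀ y ∈ I,
      (G.neighborSet x).ncard ≤ (G.neighborSet y).ncard →
      (G.neighborSet x \ G.neighborSet y).ncard ≤ 1)
    (u1 v w : V) (hu1 : u1 ∈ I) (hv : v ∈ I) (hw : w ∈ I)
    (hv1 : (G.neighborSet u1).ncard < (G.neighborSet v).ncard)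
    (hw1 : (G.neighborSet u1).ncard < (G.neighborSet w).ncard)
    (a : V) (ha : a ∈ (G.neighborSet u1 ∩ G.neighborSet w) \ G.neighborSet v)
    (a1 : V) (ha1 : a1 ∈ (G.neighborSet u1 ∩ G.neighborSet v) \ G.neighborSet w) :
    2 ≤ ((G.neighborSet v ∩ G.neighborSet w) \ G.neighborSet u1).ncard := by
  have hfin : ∀ x : V, (G.neighborSet x).Finite := fun x => Set.toFinite _
  rcases le_total (G.neighborSet v).ncard (G.neighborSet w).ncard with hle | hle
  · exact key_aux _ _ _ (hfin u1) (hfin v) (hall v hv w hw hle)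
      (hall u1 hu1 v hv hv1.le) hv1 a ha a1 ha1
  · rw [Set.inter_comm]
    exact key_aux _ _ _ (hfin u1) (hfin w) (hall w hw v hv hle)
      (hall u1 hu1 w hw hw1.le) hw1 a1 ha1 a ha
end

section
/- Let G be a split graph with partition (C, I) and suppose that for all x, y ∈ I with |N(x)| ≤ |N(y)| we have |N(x) \ N(y)| ≤ 1. Let u ∈ I and v1, v2 ∈ I with |N(v1)| > |N(u)|, |N(v2)| > |N(u)|, and suppose a1, a2 ∈ N(u) are distinct with N(u) \ N(v1) = {a1} and N(u) \ N(v2) = {a2}. Then |(N(v1) ∩ N(v2)) \ N(u)| ≥ 2. -/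
lemma aux_nbhd {V : Type*} [Fintype V] (G : SimpleGraph V) (u v1 v2 a1 a2 : V)
    (ha1 : a1 ∈ G.neighborSet u) (ha2 : a2 ∈ G.neighborSet u) (hne : a1 ≠ a2)
    (h1 : G.neighborSet u \ G.neighborSet v1 = {a1})
    (h2 : G.neighborSet u \ G.neighborSet v2 = {a2})
    (hd1 : (G.neighborSet u).ncard < (G.neighborSet v1).ncard)
    (hle : (G.neighborSet v1 \ G.neighborSet v2).ncard ≤ 1) :
    2 ≤ ((G.neighborSet v1 ∩ G.neighborSet v2) \ G.neighborSet u).ncard := by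
  set N := G.neighborSet u with hN
  set N1 := G.neighborSet v1 with hN1
  set N2 := G.neighborSet v2 with hN2
  have ha1n1 : a1 ∉ N1 := by
    have : a1 ∈ N \ N1 := by rw [h1]; rfl
    exact this.2
  have ha2n2 : a2 ∉ N2 := by
    have : a2 ∈ N \ N2 := by rw [h2]; rfl
    exact this.2
  have ha2n1 : a2 ∈ N1 := by
    by_contra h
    have : a2 ∈ N \ N1 := ⟨ha2, h⟩
    rw [h1] at this
    exact hne (this.symm)
  have hsub : N1 \ N ⊆ N2 := by
    intro x hx
    by_contra hxn2
    have hxa2 : x = a2 :=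
      (Set.ncard_le_one (Set.toFinite _)).mp hle x ⟨hx.1, hxn2⟩ a2 ⟨ha2n1, ha2n2⟩
    exact hx.2 (hxa2 ▸ ha2)
  have hsub2 : N1 \ N ⊆ (N1 ∩ N2) \ N := fun x hx => ⟨⟨hx.1, hsub hx⟩, hx.2⟩
  have hcard : (N1 ∩ N).ncard + (N1 \ N).ncard = N1.ncard := by
    rw [Set.ncard_inter_add_ncard_diff_eq_ncard N1 N (Set.toFinite _)]
  have hlt : (N1 ∩ N).ncard < N.ncard := by
    apply Set.ncard_lt_ncard _ (Set.toFinite _)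
    constructor
    · exact Set.inter_subset_right
    · intro hsup
      exact ha1n1 (hsup ha1).1
  have h2le : 2 ≤ (N1 \ N).ncard := by omega
  exact le_trans h2le (Set.ncard_le_ncard hsub2 (Set.toFinite _))

theorem stmt_11 {V : Type*} [Fintype V] (G : SimpleGraph V)
    (C I : Set V) (hunion : ∀ x, x ∈ C ∨ x ∈ I) (hdisj : Disjoint C I)
    (hC : G.IsClique C) (hI : ∀ x ∈ I, ∀ y ∈ I, ¬ G.Adj x y)
    (hall : ∀ x ∈ I, ∀ y ∈ I,
      (G.neighborSet x).ncard ≤ (G.neighborSet y).ncard →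
      (G.neighborSet x \ G.neighborSet y).ncard ≤ 1)
    (u v1 v2 : V) (hu : u ∈ I) (hv1 : v1 ∈ I) (hv2 : v2 ∈ I)
    (hd1 : (G.neighborSet u).ncard < (G.neighborSet v1).ncard)
    (hd2 : (G.neighborSet u).ncard < (G.neighborSet v2).ncard)
    (a1 a2 : V) (ha1 : a1 ∈ G.neighborSet u) (ha2 : a2 ∈ G.neighborSet u)
    (hne : a1 ≠ a2)
    (h1 : G.neighborSet u \ G.neighborSet v1 = {a1})
    (h2 : G.neighborSet u \ G.neighborSet v2 = {a2}) :
    2 ≤ ((G.neighborSet v1 ∩ G.neighborSet v2) \ G.neighborSet u).ncard := by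
  rcases le_total (G.neighborSet v1).ncard (G.neighborSet v2).ncard with h | h
  · exact aux_nbhd G u v1 v2 a1 a2 ha1 ha2 hne h1 h2 hd1 (hall v1 hv1 v2 hv2 h)
  · rw [Set.inter_comm]
    exact aux_nbhd G u v2 v1 a2 a1 ha2 ha1 hne.symm h2 h1 hd2 (hall v2 hv2 v1 hv1 h)
end

section
/- Let I0 be a family of finite subsets of a set C, all of the same cardinality d, satisfying: for any two distinct sets A, B ∈ I0, |A \ B| ≤ 1. Let N1, N2 ∈ I0 be distinct with N1 \ N2 = {a1} and N2 \ N1 = {a2}, and let I1 = I0 \ {N1, N2}. If I1 is nonempty, then either (1) every N ∈ I1 equals (N1 ∩ N2) ∪ {x} for some x ∉ {a1, a2}, or (2) every N ∈ I1 contains both a1 and a2 and equals {a1, a2} ∪ ((N1 ∩ N2) \ {y}) for some y ∈ N1 ∩ N2. -/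
theorem stmt_13 {α : Type*} [DecidableEq α]
    (I0 : Set (Finset α)) (d : ℕ)
    (hcard : ∀ A ∈ I0, A.card = d)
    (hdiff : ∀ A ∈ I0, ∀ B ∈ I0, (A \ B).card ≤ 1)
    (N1 N2 : Finset α) (hN1 : N1 ∈ I0) (hN2 : N2 ∈ I0) (hne : N1 ≠ N2)
    (a1 a2 : α) (h12 : N1 \ N2 = {a1}) (h21 : N2 \ N1 = {a2})
    (I1 : Set (Finset α)) (hI1 : I1 = I0 \ {N1, N2}) (hne1 : I1.Nonempty) :
    (∀ N ∈ I1, ∃ x, x ∉ ({a1, a2} : Finset α) ∧ N = (N1 ∩ N2) ∪ {x}) ∨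
    (∀ N ∈ I1, a1 ∈ N ∧ a2 ∈ N ∧
      ∃ y ∈ N1 ∩ N2, N = {a1, a2} ∪ ((N1 ∩ N2) \ {y})) := by
  have ha1 : a1 ∈ N1 \ N2 := by rw [h12]; exact Finset.mem_singleton_self a1
  have ha2 : a2 ∈ N2 \ N1 := by rw [h21]; exact Finset.mem_singleton_self a2
  have ha11 : a1 ∈ N1 := (Finset.mem_sdiff.mp ha1).1
  have ha12 : a1 ∉ N2 := (Finset.mem_sdiff.mp ha1).2
  have ha22 : a2 ∈ N2 := (Finset.mem_sdiff.mp ha2).1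
  have ha21 : a2 ∉ N1 := (Finset.mem_sdiff.mp ha2).2
  have ha12' : a1 ≠ a2 := fun h => ha21 (h ▸ ha11)
  have hc1 : N1.card = d := hcard N1 hN1
  have hc2 : N2.card = d := hcard N2 hN2
  -- classification of each N ∈ I1
  have key : ∀ N ∈ I1,
      (∃ x, x ∉ ({a1, a2} : Finset α) ∧ N = (N1 ∩ N2) ∪ {x}) ∨
      (a1 ∈ N ∧ a2 ∈ N ∧ ∃ y ∈ N1 ∩ N2, N = {a1, a2} ∪ ((N1 ∩ N2) \ {y})) := by
    intro N hN
    rw [hI1] at hN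
    obtain ⟨hN0, hNmem⟩ := hN
    simp only [Set.mem_insert_iff, Set.mem_singleton_iff, not_or] at hNmem
    obtain ⟨hNne1, hNne2⟩ := hNmem
    have hcN : N.card = d := hcard N hN0
    -- cardinalities of symmetric differences
    have hsd1 : (N \ N1).card = (N1 \ N).card :=
      Finset.card_sdiff_comm (by rw [hc1, hcN])
    have hsd2 : (N \ N2).card = (N2 \ N).card :=
      Finset.card_sdiff_comm (by rw [hc2, hcN])
    have hle1 : (N \ N1).card ≤ 1 := hdiff N hN0 N1 hN1
    have hle2 : (N \ N2).card ≤ 1 := hdiff N hN0 N2 hN2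
    have hle1' : (N1 \ N).card ≤ 1 := hdiff N1 hN1 N hN0
    have hle2' : (N2 \ N).card ≤ 1 := hdiff N2 hN2 N hN0
    have hne1' : N \ N1 ≠ ∅ := by
      intro h
      exact hNne1 (Finset.eq_of_subset_of_card_le
        (Finset.sdiff_eq_empty_iff_subset.mp h) (by rw [hc1, hcN]))
    have hne2' : N \ N2 ≠ ∅ := by
      intro h
      exact hNne2 (Finset.eq_of_subset_of_card_le
        (Finset.sdiff_eq_empty_iff_subset.mp h) (by rw [hc2, hcN]))
    have hcd1 : (N \ N1).card = 1 :=
      le_antisymm hle1 (Finset.one_le_card.mpr (Finset.nonempty_iff_ne_empty.mpr hne1'))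
    have hcd2 : (N \ N2).card = 1 :=
      le_antisymm hle2 (Finset.one_le_card.mpr (Finset.nonempty_iff_ne_empty.mpr hne2'))
    by_cases h1 : a1 ∈ N
    · by_cases h2 : a2 ∈ N
      · -- both a1, a2 ∈ N : case (2)
        right
        have hNd2 : N \ N2 = {a1} := by
          apply Finset.eq_singleton_iff_unique_mem.mpr
          refine ⟨Finset.mem_sdiff.mpr ⟨h1, ha12⟩, fun b hb => ?_⟩
          exact Finset.card_le_one.mp hle2 b hb a1 (Finset.mem_sdiff.mpr ⟨h1, ha12⟩)
        have hNd1 : N \ N1 = {a2} := by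
          apply Finset.eq_singleton_iff_unique_mem.mpr
          refine ⟨Finset.mem_sdiff.mpr ⟨h2, ha21⟩, fun b hb => ?_⟩
          exact Finset.card_le_one.mp hle1 b hb a2 (Finset.mem_sdiff.mpr ⟨h2, ha21⟩)
        set S : Finset α := (N1 ∩ N2) ∪ {a1, a2} with hS
        have hNS : N ⊆ S := by
          intro z hz
          by_cases hz1 : z ∈ N1
          · by_cases hz2 : z ∈ N2
            · exact Finset.mem_union_left _ (Finset.mem_inter.mpr ⟨hz1, hz2⟩)
            · have : z = a1 := Finset.mem_singleton.mp (hNd2 ▸ Finset.mem_sdiff.mpr ⟨hz, hz2⟩)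
              subst this
              exact Finset.mem_union_right _ (by simp)
          · have : z = a2 := Finset.mem_singleton.mp (hNd1 ▸ Finset.mem_sdiff.mpr ⟨hz, hz1⟩)
            subst this
            exact Finset.mem_union_right _ (by simp)
        have hdisj : Disjoint (N1 ∩ N2) ({a1, a2} : Finset α) := by
          rw [Finset.disjoint_right]
          intro b hb
          rcases Finset.mem_insert.mp hb with rfl | hb
          · simp [ha12]
          · rw [Finset.mem_singleton] at hb
            subst hb
            simp [ha21]
        have hcint : (N1 ∩ N2).card + 1 = d := by
          have := Finset.card_inter_add_card_sdiff N1 N2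
          rw [h12, Finset.card_singleton, hc1] at this
          exact this
        have hcS : S.card = d + 1 := by
          rw [hS, Finset.card_union_of_disjoint hdisj,
            Finset.card_insert_of_notMem (by simp [ha12']), Finset.card_singleton]
          omega
        have hSN : (S \ N).Nonempty := by
          rw [← Finset.card_pos, Finset.card_sdiff_of_subset hNS, hcS, hcN]
          omega
        obtain ⟨y, hy⟩ := hSN
        have hyS := (Finset.mem_sdiff.mp hy).1
        have hyN := (Finset.mem_sdiff.mp hy).2
        have hy1 : y ≠ a1 := fun h => hyN (h ▸ h1)
        have hy2 : y ≠ a2 := fun h => hyN (h ▸ h2)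
        have hyI : y ∈ N1 ∩ N2 := by
          rcases Finset.mem_union.mp hyS with h | h
          · exact h
          · rcases Finset.mem_insert.mp h with h | h
            · exact absurd h hy1
            · exact absurd (Finset.mem_singleton.mp h) hy2
        refine ⟨h1, h2, y, hyI, ?_⟩
        have hNeq : N = S \ {y} := by
          apply Finset.eq_of_subset_of_card_le
          · intro z hz
            exact Finset.mem_sdiff.mpr ⟨hNS hz,
              fun h => hyN ((Finset.mem_singleton.mp h) ▸ hz)⟩
          · rw [Finset.card_sdiff_of_subset (Finset.singleton_subset_iff.mpr hyS),
              Finset.card_singleton, hcS, hcN]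
            omega
        rw [hNeq, hS, Finset.union_sdiff_distrib]
        have : ({a1, a2} : Finset α) \ {y} = {a1, a2} := by
          apply Finset.sdiff_eq_self_of_disjoint
          rw [Finset.disjoint_singleton_right]
          simp only [Finset.mem_insert, Finset.mem_singleton, not_or]
          exact ⟨hy1, hy2⟩
        rw [this, Finset.union_comm]
      · -- a1 ∈ N, a2 ∉ N : contradiction, N = N1
        exfalso
        have hNd2 : N \ N2 = {a1} := by
          apply Finset.eq_singleton_iff_unique_mem.mpr
          refine ⟨Finset.mem_sdiff.mpr ⟨h1, ha12⟩, fun b hb => ?_⟩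
          exact Finset.card_le_one.mp hle2 b hb a1 (Finset.mem_sdiff.mpr ⟨h1, ha12⟩)
        apply hNne1
        apply Finset.eq_of_subset_of_card_le _ (by rw [hc1, hcN])
        intro z hz
        by_cases hz2 : z ∈ N2
        · by_contra hz1
          have : z = a2 := Finset.mem_singleton.mp (h21 ▸ Finset.mem_sdiff.mpr ⟨hz2, hz1⟩)
          exact h2 (this ▸ hz)
        · have : z = a1 := Finset.mem_singleton.mp (hNd2 ▸ Finset.mem_sdiff.mpr ⟨hz, hz2⟩)
          exact this ▸ ha11
    · by_cases h2 : a2 ∈ N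
      · -- a2 ∈ N, a1 ∉ N : contradiction, N = N2
        exfalso
        have hNd1 : N \ N1 = {a2} := by
          apply Finset.eq_singleton_iff_unique_mem.mpr
          refine ⟨Finset.mem_sdiff.mpr ⟨h2, ha21⟩, fun b hb => ?_⟩
          exact Finset.card_le_one.mp hle1 b hb a2 (Finset.mem_sdiff.mpr ⟨h2, ha21⟩)
        apply hNne2
        apply Finset.eq_of_subset_of_card_le _ (by rw [hc2, hcN])
        intro z hz
        by_cases hz1 : z ∈ N1
        · by_contra hz2
          have : z = a1 := Finset.mem_singleton.mp (h12 ▸ Finset.mem_sdiff.mpr ⟨hz1, hz2⟩)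
          exact h1 (this ▸ hz)
        · have : z = a2 := Finset.mem_singleton.mp (hNd1 ▸ Finset.mem_sdiff.mpr ⟨hz, hz1⟩)
          exact this ▸ ha22
      · -- neither : case (1)
        left
        have hN1N : N1 \ N = {a1} := by
          apply Finset.eq_singleton_iff_unique_mem.mpr
          refine ⟨Finset.mem_sdiff.mpr ⟨ha11, h1⟩, fun b hb => ?_⟩
          exact Finset.card_le_one.mp hle1' b hb a1 (Finset.mem_sdiff.mpr ⟨ha11, h1⟩)
        obtain ⟨u, hu⟩ := Finset.card_eq_one.mp hcd1
        have huN : u ∈ N ∧ u ∉ N1 := Finset.mem_sdiff.mp (hu ▸ Finset.mem_singleton_self u)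
        refine ⟨u, ?_, ?_⟩
        · simp only [Finset.mem_insert, Finset.mem_singleton, not_or]
          exact ⟨fun h => huN.2 (h ▸ ha11), fun h => h2 (h ▸ huN.1)⟩
        · ext z
          simp only [Finset.mem_union, Finset.mem_inter, Finset.mem_singleton]
          constructor
          · intro hz
            by_cases hz1 : z ∈ N1
            · left
              refine ⟨hz1, ?_⟩
              by_contra hz2
              have : z = a1 := Finset.mem_singleton.mp (h12 ▸ Finset.mem_sdiff.mpr ⟨hz1, hz2⟩)
              exact h1 (this ▸ hz)
            · exact Or.inr (Finset.mem_singleton.mp (hu ▸ Finset.mem_sdiff.mpr ⟨hz, hz1⟩))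
          · rintro (⟨hz1, hz2⟩ | rfl)
            · by_contra hz
              have : z = a1 := Finset.mem_singleton.mp (hN1N ▸ Finset.mem_sdiff.mpr ⟨hz1, hz⟩)
              exact ha12 (this ▸ hz2)
            · exact huN.1
  -- now combine: all of form (1) or all of form (2)
  by_cases hall : ∀ N ∈ I1, ∃ x, x ∉ ({a1, a2} : Finset α) ∧ N = (N1 ∩ N2) ∪ {x}
  · exact Or.inl hall
  · right
    push_neg at hall
    obtain ⟨M, hM, hMnot⟩ := hall
    have hM2 : a1 ∈ M ∧ a2 ∈ M ∧ ∃ y ∈ N1 ∩ N2, M = {a1, a2} ∪ ((N1 ∩ N2) \ {y}) := by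
      rcases key M hM with h | h
      · obtain ⟨x, hx1, hx2⟩ := h
        exact absurd hx2 (hMnot x hx1)
      · exact h
    intro N hN
    rcases key N hN with h | h
    · -- N of form (1), M of form (2): contradiction via |M \ N| ≥ 2
      exfalso
      obtain ⟨x, hx1, hx2⟩ := h
      simp only [Finset.mem_insert, Finset.mem_singleton, not_or] at hx1
      have hMI : M ∈ I0 := by rw [hI1] at hM; exact hM.1
      have hNI : N ∈ I0 := by rw [hI1] at hN; exact hN.1
      have hsub : ({a1, a2} : Finset α) ⊆ M \ N := by
        intro b hb
        have hbN : b ∉ N := by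
          rw [hx2]
          rcases Finset.mem_insert.mp hb with rfl | hb'
          · simp only [Finset.mem_union, Finset.mem_inter, Finset.mem_singleton, not_or]
            exact ⟨fun h => ha12 h.2, Ne.symm hx1.1⟩
          · rw [Finset.mem_singleton] at hb'
            subst hb'
            simp only [Finset.mem_union, Finset.mem_inter, Finset.mem_singleton, not_or]
            exact ⟨fun h => ha21 h.1, Ne.symm hx1.2⟩
        have hbM : b ∈ M := by
          rcases Finset.mem_insert.mp hb with rfl | hb'
          · exact hM2.1
          · exact (Finset.mem_singleton.mp hb') ▸ hM2.2.1
        exact Finset.mem_sdiff.mpr ⟨hbM, hbN⟩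
      have : 2 ≤ (M \ N).card := by
        calc 2 = ({a1, a2} : Finset α).card := by
                rw [Finset.card_insert_of_notMem (by simp [ha12']), Finset.card_singleton]
          _ ≤ (M \ N).card := Finset.card_le_card hsub
      have := hdiff M hMI N hNI
      omega
    · exact h
end

section
/- Let G be a split graph with partition (C, I), let S ⊆ V(G) be such that G − S is P4-free, and let u, v ∈ I be distinct with N(u) = {a} and N(v) = {b}, a ≠ b. If u ∈ S, then S' = (S \ {u}) ∪ {a} also has G − S' P4-free with |S'| ≤ |S|; consequently, there exists a solution S'' with |S''| ≤ |S| such that a ∈ S'' or b ∈ S''. -/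
variable {V : Type*}

lemma swap_key [Fintype V] (G : SimpleGraph V) (S : Set V)
    (hS : P4Free (G.induce Sᶜ)) (u a : V) (hNu : G.neighborSet u = {a})
    (huS : u ∈ S) :
    P4Free (G.induce ((S \ {u}) ∪ {a})ᶜ) ∧ ((S \ {u}) ∪ {a}).ncard ≤ S.ncard := by
  set S' := (S \ {u}) ∪ {a} with hS'
  have haS' : a ∈ S' := Or.inr rfl
  constructor
  · rintro ⟨x, y, z, w, hxy, hxz, hxw, hyz, hyw, hzw, axy, ayz, azw, nxz, nxw, nyw⟩
    have key : ∀ p q : ↥S'ᶜ, (G.induce S'ᶜ).Adj p q → (p : V) ≠ u := by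
      intro p q hpq hp
      have hadj : G.Adj (p : V) (q : V) := hpq
      rw [hp] at hadj
      have : (q : V) ∈ G.neighborSet u := hadj
      rw [hNu] at this
      exact q.2 (this ▸ haS')
    have hxu := key x y axy
    have hyu := key y x axy.symm
    have hzu := key z y ayz.symm
    have hwu := key w z azw.symm
    have mem : ∀ p : ↥S'ᶜ, (p : V) ≠ u → (p : V) ∈ Sᶜ := by
      intro p hp
      have h2 := p.2
      simp only [hS', Set.mem_compl_iff, Set.mem_union, Set.mem_diff,
        Set.mem_singleton_iff, not_or, not_and, not_not] at h2 ⊢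
      intro hpS
      exact hp (h2.1 hpS)
    refine hS ⟨⟨x, mem x hxu⟩, ⟨y, mem y hyu⟩, ⟨z, mem z hzu⟩, ⟨w, mem w hwu⟩,
      ?_, ?_, ?_, ?_, ?_, ?_, axy, ayz, azw, nxz, nxw, nyw⟩
    · exact fun h => hxy (Subtype.ext (Subtype.mk_eq_mk.mp h))
    · exact fun h => hxz (Subtype.ext (Subtype.mk_eq_mk.mp h))
    · exact fun h => hxw (Subtype.ext (Subtype.mk_eq_mk.mp h))
    · exact fun h => hyz (Subtype.ext (Subtype.mk_eq_mk.mp h))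
    · exact fun h => hyw (Subtype.ext (Subtype.mk_eq_mk.mp h))
    · exact fun h => hzw (Subtype.ext (Subtype.mk_eq_mk.mp h))
  · have hfin : S.Finite := S.toFinite
    calc S'.ncard ≤ (S \ {u}).ncard + ({a} : Set V).ncard := Set.ncard_union_le _ _
      _ = (S \ {u}).ncard + 1 := by rw [Set.ncard_singleton]
      _ = S.ncard := Set.ncard_diff_singleton_add_one huS hfin

theorem stmt_18 [Fintype V] (G : SimpleGraph V)
    (C I : Set V) (hunion : ∀ x, x ∈ C ∨ x ∈ I) (hdisj : Disjoint C I)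
    (hC : G.IsClique C) (hI : ∀ x ∈ I, ∀ y ∈ I, ¬ G.Adj x y)
    (S : Set V) (hS : P4Free (G.induce Sᶜ))
    (u v : V) (hu : u ∈ I) (hv : v ∈ I) (huv : u ≠ v)
    (a b : V) (hab : a ≠ b)
    (hNu : G.neighborSet u = {a}) (hNv : G.neighborSet v = {b}) :
    (u ∈ S → P4Free (G.induce ((S \ {u}) ∪ {a})ᶜ) ∧
      ((S \ {u}) ∪ {a}).ncard ≤ S.ncard) ∧
    ∃ S'' : Set V, S''.ncard ≤ S.ncard ∧ P4Free (G.induce S''ᶜ) ∧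
      (a ∈ S'' ∨ b ∈ S'') := by
  have hua : G.Adj u a := by
    have : a ∈ G.neighborSet u := by rw [hNu]; rfl
    exact this
  have hvb : G.Adj v b := by
    have : b ∈ G.neighborSet v := by rw [hNv]; rfl
    exact this
  have haC : a ∈ C := by
    rcases hunion a with h | h
    · exact h
    · exact absurd hua (hI u hu a h)
  have hbC : b ∈ C := by
    rcases hunion b with h | h
    · exact h
    · exact absurd hvb (hI v hv b h)
  refine ⟨fun huS => swap_key G S hS u a hNu huS, ?_⟩
  by_cases haS : a ∈ S
  · exact ⟨S, le_refl _, hS, Or.inl haS⟩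
  by_cases hbS : b ∈ S
  · exact ⟨S, le_refl _, hS, Or.inr hbS⟩
  by_cases huS : u ∈ S
  · obtain ⟨h1, h2⟩ := swap_key G S hS u a hNu huS
    exact ⟨(S \ {u}) ∪ {a}, h2, h1, Or.inl (Or.inr rfl)⟩
  by_cases hvS : v ∈ S
  · obtain ⟨h1, h2⟩ := swap_key G S hS v b hNv hvS
    exact ⟨(S \ {v}) ∪ {b}, h2, h1, Or.inr (Or.inr rfl)⟩
  -- now u, v, a, b all outside S: u-a-b-v is an induced P4 in G - S, contradiction
  exfalso
  have hIC : ∀ x ∈ I, ∀ y ∈ C, x ≠ y := fun x hx y hy h =>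
    hdisj.ne_of_mem hy hx h.symm
  have hnub : ¬ G.Adj u b := by
    intro h
    have : b ∈ G.neighborSet u := h
    rw [hNu] at this
    exact hab this.symm
  have hnav : ¬ G.Adj a v := by
    intro h
    have : a ∈ G.neighborSet v := h.symm
    rw [hNv] at this
    exact hab this
  refine hS ⟨⟨u, huS⟩, ⟨a, haS⟩, ⟨b, hbS⟩, ⟨v, hvS⟩, ?_, ?_, ?_, ?_, ?_, ?_,
    hua, hC haC hbC hab, hvb.symm, hnub, hI u hu v hv, hnav⟩
  · exact fun h => hua.ne (congrArg Subtype.val h)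
  · exact fun h => hIC u hu b hbC (congrArg Subtype.val h)
  · exact fun h => huv (congrArg Subtype.val h)
  · exact fun h => hab (congrArg Subtype.val h)
  · exact fun h => (hIC v hv a haC) (congrArg Subtype.val h).symm
  · exact fun h => hvb.ne (congrArg Subtype.val h).symm
end
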